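/- Let 𝒜 = ℂ[E₁,E₂,A₀,A₁] with the derivation f as above and v = A₀ − (1/2)E₁A₁. Then for every odd integer m ≥ 1, the m-th iterate of f annihilates A₁^m·v: f^m(A₁^m v) = 0. -/

import Mathlib

/-!
Substitute `E₁ = x + y`, `E₂ = x y`; this embeds `ℂ[E₁, E₂]` into `ℂ[x, y]` and turns `f` into
`x² ∂ₓ + y² ∂_y`. For `m = 2k + 1` the element `w = A₁ᵐ v` satisfies `f w = -k E₁ w`, hence
`fᵐ w = (f - k E₁)ᵐ(1) · w`, and `f - k E₁` becomes the sum of the commuting operators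
`x² ∂ₓ - k x` and `y² ∂_y - k y`. As `(x² ∂ₓ - k x)ᵃ 1 = (-k)(-k + 1)⋯(-k + a - 1) xᵃ` vanishes
for `a > k`, every term of the binomial expansion of `(f - k E₁)^(2k+1) 1` is zero.
-/

open MvPolynomial

namespace Derivation

variable {K A B : Type*} [CommRing K] [CommRing A] [Algebra K A] [CommRing B] [Algebra K B]

def twist (d : Derivation K A A) (a : A) : Module.End K A :=
  d.toLinearMap + LinearMap.mulLeft K a

@[simp]
lemma twist_apply (d : Derivation K A A) (a p : A) : d.twist a p = d p + a * p := rfl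

lemma twist_add (d₁ d₂ : Derivation K A A) (a₁ a₂ : A) :
    (d₁ + d₂).twist (a₁ + a₂) = d₁.twist a₁ + d₂.twist a₂ := by
  ext p
  simp only [twist_apply, LinearMap.add_apply, coe_add, Pi.add_apply]
  ring

lemma commute_twist {d₁ d₂ : Derivation K A A} {a₁ a₂ : A} (hd : ⁅d₁, d₂⁆ = 0)
    (ha : d₁ a₂ = d₂ a₁) : Commute (d₁.twist a₁) (d₂.twist a₂) := by
  ext p
  have hp := congr($hd p)
  rw [commutator_apply, coe_zero, Pi.zero_apply, sub_eq_zero] at hp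
  simp only [Module.End.mul_apply, twist_apply, map_add, leibniz, smul_eq_mul, hp, ha]
  ring

lemma toLinearMap_pow_apply_mul {d : Derivation K A A} {w a : A} (hw : d w = a * w) (r : ℕ)
    (p : A) : (d.toLinearMap ^ r) (p * w) = (d.twist a ^ r) p * w := by
  induction r with
  | zero => simp
  | succ r ih =>
    rw [pow_succ', Module.End.mul_apply, ih, pow_succ', Module.End.mul_apply, twist_apply,
      coeFn_coe, leibniz, hw, smul_eq_mul, smul_eq_mul]
    ring

lemma map_twist_pow_apply (φ : A →ₐ[K] B) {d : Derivation K A A} {δ : Derivation K B B}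
    (h : ∀ p, φ (d p) = δ (φ p)) (a : A) (r : ℕ) (p : A) :
    φ ((d.twist a ^ r) p) = (δ.twist (φ a) ^ r) (φ p) := by
  have hφ : (δ.twist (φ a)).comp φ.toLinearMap = φ.toLinearMap.comp (d.twist a) := by
    ext p
    simp [h]
  exact congr($(Module.End.commute_pow_left_of_commute hφ r) p).symm

end Derivation

namespace MvPolynomial

variable {σ K B : Type*} [CommRing K] [CommRing B] [Algebra K B]

lemma map_derivation_eq_of_X (φ : MvPolynomial σ K →ₐ[K] B)
    {d : Derivation K (MvPolynomial σ K) (MvPolynomial σ K)} {δ : Derivation K B B}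
    (h : ∀ i, φ (d (X i)) = δ (φ (X i))) (p : MvPolynomial σ K) : φ (d p) = δ (φ p) := by
  induction p using MvPolynomial.induction_on with
  | C a => simp [derivation_C, algHom_C]
  | add p q hp hq => simp [hp, hq]
  | mul_X p i hp => simp [Derivation.leibniz, hp, h]

variable (K) in
noncomputable def sqPDeriv (i : σ) : Derivation K (MvPolynomial σ K) (MvPolynomial σ K) :=
  (X i ^ 2 : MvPolynomial σ K) • pderiv i

@[simp]
lemma sqPDeriv_apply (i : σ) (p : MvPolynomial σ K) : sqPDeriv K i p = X i ^ 2 * pderiv i p := rfl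

lemma sqPDeriv_twist_X_pow_mul (i : σ) (c : K) {q : MvPolynomial σ K}
    (hq : pderiv i q = 0) (n : ℕ) :
    (sqPDeriv K i).twist (c • X i) (X i ^ n * q) = ((n : K) + c) • (X i ^ (n + 1) * q) := by
  rcases n with _ | n
  · simp [hq]
  · simp [hq, Derivation.leibniz, smul_eq_C_mul]
    ring

lemma sqPDeriv_twist_pow_X_pow_mul (i : σ) (c : K) {q : MvPolynomial σ K}
    (hq : pderiv i q = 0) (j n : ℕ) :
    ((sqPDeriv K i).twist (c • X i) ^ j) (X i ^ n * q) =
      (ascPochhammer K j).eval ((n : K) + c) • (X i ^ (n + j) * q) := by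
  induction j generalizing n with
  | zero => simp
  | succ j ih =>
    rw [pow_succ, Module.End.mul_apply, sqPDeriv_twist_X_pow_mul i c hq, map_smul, ih,
      smul_smul, ascPochhammer_succ_left, Polynomial.eval_mul, Polynomial.eval_comp,
      Polynomial.eval_X, Polynomial.eval_add, Polynomial.eval_X, Polynomial.eval_one,
      Nat.cast_succ, add_right_comm (n : K), ← add_assoc n j 1, add_right_comm n 1 j]

lemma commute_sqPDeriv_twist {i j : σ} (hij : i ≠ j) (c : K) :
    Commute ((sqPDeriv K i).twist (c • X i)) ((sqPDeriv K j).twist (c • X j)) := by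
  classical
  refine Derivation.commute_twist (derivation_ext fun l ↦ ?_)
    (by simp [pderiv_X_of_ne hij, pderiv_X_of_ne hij.symm])
  simp only [Derivation.commutator_apply, sqPDeriv_apply, pderiv_X, Pi.single_apply]
  split_ifs <;> simp_all [pderiv_X_of_ne hij, pderiv_X_of_ne hij.symm]

lemma sqPDeriv_add_twist_pow_apply_one_eq_zero {i j : σ} (hij : i ≠ j) (k : ℕ) :
    (((sqPDeriv K i + sqPDeriv K j).twist (-(k : K) • (X i + X j))) ^ (2 * k + 1)) 1 = 0 := by
  rw [smul_add, Derivation.twist_add, (commute_sqPDeriv_twist hij _).add_pow',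
    LinearMap.sum_apply]
  refine Finset.sum_eq_zero fun ⟨a, b⟩ hab ↦ ?_
  rw [Finset.HasAntidiagonal.mem_antidiagonal] at hab
  have hb := sqPDeriv_twist_pow_X_pow_mul j (-(k : K)) (q := 1) (by simp) b 0
  have ha := sqPDeriv_twist_pow_X_pow_mul i (-(k : K)) (q := X j ^ b)
    (by simp [pderiv_X_of_ne hij.symm]) a 0
  simp only [pow_zero, one_mul, mul_one, zero_add, Nat.cast_zero] at ha hb
  rw [LinearMap.smul_apply, Module.End.mul_apply, hb, map_smul, ha, smul_smul]
  obtain h | h : k < a ∨ k < b := by omega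
  all_goals simp [ascPochhammer_eval_neg_coe_nat_of_lt h]

end MvPolynomial

/-- `f` on the subring `ℂ[E₁, E₂]`, which it preserves. -/
noncomputable def derivE : Derivation ℂ (MvPolynomial (Fin 2) ℂ) (MvPolynomial (Fin 2) ℂ) :=
  mkDerivation ℂ ![X 0 ^ 2 - 2 * X 1, X 0 * X 1]

noncomputable def esymmTwo : MvPolynomial (Fin 2) ℂ →ₐ[ℂ] MvPolynomial (Fin 2) ℂ :=
  (symmetricSubalgebra (Fin 2) ℂ).val.comp (esymmAlgHom (Fin 2) ℂ 2)

lemma esymmTwo_injective : Function.Injective esymmTwo :=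
  Subtype.val_injective.comp (esymmAlgHom_injective ℂ (by simp))

lemma esymmTwo_X_zero : esymmTwo (X 0) = X 0 + X 1 := by
  simp [esymmTwo, esymmAlgHom, esymm, Finset.powersetCard_one]

lemma esymmTwo_X_one : esymmTwo (X 1) = X 0 * X 1 := by
  have huniv : Finset.powersetCard 2 (Finset.univ : Finset (Fin 2)) = {Finset.univ} := by decide
  simp [esymmTwo, esymmAlgHom, esymm, huniv]

lemma esymmTwo_derivE (p : MvPolynomial (Fin 2) ℂ) :
    esymmTwo (derivE p) =
      (sqPDeriv ℂ 0 + sqPDeriv ℂ 1 : Derivation ℂ (MvPolynomial (Fin 2) ℂ) _) (esymmTwo p) := by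
  refine map_derivation_eq_of_X esymmTwo (fun i ↦ ?_) p
  fin_cases i <;>
    simp [derivE, esymmTwo_X_zero, esymmTwo_X_one, Derivation.leibniz, map_ofNat] <;> ring

lemma derivE_twist_pow_apply_one (k : ℕ) :
    (derivE.twist (-(k : ℂ) • X 0) ^ (2 * k + 1)) 1 = 0 := by
  apply esymmTwo_injective
  rw [Derivation.map_twist_pow_apply _ esymmTwo_derivE, map_one, map_zero, map_smul,
    esymmTwo_X_zero]
  exact sqPDeriv_add_twist_pow_apply_one_eq_zero (by decide) k

lemma apply_X3_pow_mul_v (f : Derivation ℂ (MvPolynomial (Fin 4) ℂ) (MvPolynomial (Fin 4) ℂ))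
    (hf1 : f (X 0) = X 0 ^ 2 - 2 * X 1)
    (hf3 : f (X 2) = (1 / 2 : ℂ) • (X 0 * X 2) - X 1 * X 3)
    (hf4 : f (X 3) = -((1 / 2 : ℂ) • (X 0 * X 3))) (k : ℕ) :
    f (X 3 ^ (2 * k + 1) * (X 2 - (1 / 2 : ℂ) • (X 0 * X 3))) =
      (-(k : ℂ) • X 0) * (X 3 ^ (2 * k + 1) * (X 2 - (1 / 2 : ℂ) • (X 0 * X 3))) := by
  have h2 : 2 * C (1 / 2 : ℂ) = (1 : MvPolynomial (Fin 4) ℂ) := by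
    rw [← map_ofNat C 2, ← map_mul]
    norm_num
  simp only [Derivation.leibniz, Derivation.leibniz_pow, map_sub, map_neg, hf1, hf3,
    hf4, smul_eq_C_mul, smul_eq_mul, nsmul_eq_mul, map_natCast, Nat.add_sub_cancel,
    derivation_C]
  push_cast
  linear_combination (X 3 ^ (2 * k + 2) * (X 1 + C (1 / 2 : ℂ) * X 0 ^ 2) -
    k * X 0 * X 3 ^ (2 * k + 1) * (X 2 - C (1 / 2 : ℂ) * X 0 * X 3)) * h2

theorem f_iterate_kills_A1m_v
    (f : Derivation ℂ (MvPolynomial (Fin 4) ℂ) (MvPolynomial (Fin 4) ℂ))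
    (hf1 : f (X 0) = X 0 ^ 2 - 2 * X 1) (hf2 : f (X 1) = X 0 * X 1)
    (hf3 : f (X 2) = (1 / 2 : ℂ) • (X 0 * X 2) - X 1 * X 3)
    (hf4 : f (X 3) = -((1 / 2 : ℂ) • (X 0 * X 3)))
    (v : MvPolynomial (Fin 4) ℂ) (hv : v = X 2 - (1 / 2 : ℂ) • (X 0 * X 3))
    (m : ℕ) (hm : Odd m) :
    (f.toLinearMap ^ m) (X 3 ^ m * v) = 0 := by
  obtain ⟨k, rfl⟩ := hm
  subst hv
  let ι : MvPolynomial (Fin 2) ℂ →ₐ[ℂ] MvPolynomial (Fin 4) ℂ := aeval ![X 0, X 1]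
  have hι (p : MvPolynomial (Fin 2) ℂ) : ι (derivE p) = f (ι p) :=
    map_derivation_eq_of_X ι (fun i ↦ by fin_cases i <;> simp [ι, derivE, hf1, hf2, map_ofNat]) p
  have hE₁ : ι (-(k : ℂ) • X 0) = -(k : ℂ) • X 0 := by simp [ι]
  rw [← one_mul (X 3 ^ _ * _),
    Derivation.toLinearMap_pow_apply_mul (apply_X3_pow_mul_v f hf1 hf3 hf4 k), ← map_one ι,
    ← hE₁, ← Derivation.map_twist_pow_apply ι hι, derivE_twist_pow_apply_one, map_zero,
    zero_mul]
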